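/- Let η ∈ (-1, 1) and let c ∈ (-1, 1) satisfy ∫_{-1}^{1} (v - c)/(1 + η · sgn(v - c)) dv > 0 (which holds exactly when c < c^*, the unique zero of this integral as a function of c). For λ ∈ [0, (1-η)/(1+c)), define h(λ) = ∫_{-1}^{1} (v - c) / ( 1 + η · sgn(v - c) + λ (v - c) ) dv; the denominator is strictly positive for all v ∈ (-1,1), v ≠ c, in this range of λ. Then h(0) > 0 and h(λ) → -∞ as λ → ((1-η)/(1+c))⁻, and consequently there exists a smallest λ_- ∈ (0, (1-η)/(1+c)) with h(λ_-) = 0. -/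

import Mathlib

/-!
Write `Λ = (1 - η) / (1 + c)`. For `λ ∈ [0, Λ)` the denominator is at least
`min (1 + η) (1 - η - λ (1 + c)) > 0`, so the integrand is dominated by a multiple of `|v - c|`
locally uniformly in `λ`, and `h` is continuous on `[0, Λ)` by dominated convergence.
On `v > c` the integrand is at most `(1 - c) / (1 + η)`, while on `v < c` the integral equals
`(1 + c) / λ + (1 - η) / λ² · log ((1 - η - λ (1 + c)) / (1 - η))`, which tends to `-∞` as
`λ → Λ⁻`. As `h 0 > 0`, the intermediate value theorem gives a zero of `h`, and the zeros in a
compact subinterval `[0, t]` with `h t < 0` form a compact set with a least element.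
-/

open Filter Set MeasureTheory intervalIntegral Topology

@[fun_prop]
theorem Real.measurable_sign : Measurable Real.sign := by
  unfold Real.sign
  exact Measurable.ite measurableSet_Iio measurable_const
    (Measurable.ite measurableSet_Ioi measurable_const measurable_const)

noncomputable def dispersionDenom (η c lam v : ℝ) : ℝ :=
  1 + η * Real.sign (v - c) + lam * (v - c)

noncomputable def dispersionIntegrand (η c lam v : ℝ) : ℝ :=
  (v - c) / dispersionDenom η c lam v

noncomputable def dispersion (η c lam : ℝ) : ℝ :=
  ∫ v in (-1 : ℝ)..1, dispersionIntegrand η c lam v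

/-- The part of `dispersion` coming from `v < c`, where the tumbling rate is `1 - η`. -/
noncomputable def dispersionLeft (η c lam : ℝ) : ℝ :=
  ∫ v in (-1 : ℝ)..c, (v - c) / (1 - η + lam * (v - c))

section Dispersion

variable {η c lam v : ℝ}

theorem min_le_dispersionDenom (hlam : 0 ≤ lam) (hv : -1 ≤ v) (hvc : v ≠ c) :
    min (1 + η) (1 - η - lam * (1 + c)) ≤ dispersionDenom η c lam v := by
  rcases hvc.lt_or_gt with hvc | hvc
  · rw [dispersionDenom, Real.sign_of_neg (sub_neg.2 hvc)]
    nlinarith [min_le_right (1 + η) (1 - η - lam * (1 + c))]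
  · rw [dispersionDenom, Real.sign_of_pos (sub_pos.2 hvc)]
    nlinarith [min_le_left (1 + η) (1 - η - lam * (1 + c))]

theorem dispersionDenom_pos (hη : -1 < η) (hlam0 : 0 ≤ lam) (hlam : lam * (1 + c) < 1 - η)
    (hv : -1 ≤ v) : 0 < dispersionDenom η c lam v := by
  rcases eq_or_ne v c with rfl | hvc
  · simp [dispersionDenom]
  · exact (lt_min (by linarith) (by linarith)).trans_le (min_le_dispersionDenom hlam0 hv hvc)

theorem measurable_dispersionIntegrand : Measurable (dispersionIntegrand η c lam) := by
  unfold dispersionIntegrand dispersionDenom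
  fun_prop

theorem abs_dispersionIntegrand_le {δ : ℝ} (hlam : 0 ≤ lam) (hv : -1 ≤ v) (hδ : 0 < δ)
    (hδle : δ ≤ min (1 + η) (1 - η - lam * (1 + c))) :
    |dispersionIntegrand η c lam v| ≤ |v - c| / δ := by
  rcases eq_or_ne v c with rfl | hvc
  · simp [dispersionIntegrand]
  · have hden := hδle.trans (min_le_dispersionDenom hlam hv hvc)
    rw [dispersionIntegrand, abs_div, abs_of_pos (hδ.trans_le hden)]
    exact div_le_div_of_nonneg_left (abs_nonneg _) hδ hden

theorem intervalIntegrable_dispersionIntegrand (hη : -1 < η) (hlam0 : 0 ≤ lam)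
    (hlam : lam * (1 + c) < 1 - η) :
    IntervalIntegrable (dispersionIntegrand η c lam) volume (-1) 1 := by
  have hδ : 0 < min (1 + η) (1 - η - lam * (1 + c)) := lt_min (by linarith) (by linarith)
  refine IntervalIntegrable.mono_fun'
    (g := fun v => |v - c| / min (1 + η) (1 - η - lam * (1 + c)))
    (Continuous.intervalIntegrable (by fun_prop) _ _)
    measurable_dispersionIntegrand.aestronglyMeasurable ?_
  filter_upwards [ae_restrict_mem measurableSet_uIoc] with v hv
  rw [uIoc_of_le (by norm_num)] at hv
  exact abs_dispersionIntegrand_le hlam0 hv.1.le hδ le_rfl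

theorem continuousOn_dispersion (hη : -1 < η) (hc : -1 < c) :
    ContinuousOn (dispersion η c) (Ico 0 ((1 - η) / (1 + c))) := by
  intro lam₀ ⟨hlam₀, hlam₀Λ⟩
  obtain ⟨lam₁, hlam₀₁, hlam₁Λ⟩ := exists_between hlam₀Λ
  rw [lt_div_iff₀ (by linarith)] at hlam₀Λ hlam₁Λ
  have hδ : 0 < min (1 + η) (1 - η - lam₁ * (1 + c)) := lt_min (by linarith) (by linarith)
  refine continuousWithinAt_of_dominated_interval
    (bound := fun v => |v - c| / min (1 + η) (1 - η - lam₁ * (1 + c)))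
    (Eventually.of_forall fun _ => measurable_dispersionIntegrand.aestronglyMeasurable)
    ?_ (Continuous.intervalIntegrable (by fun_prop) _ _) (ae_of_all _ fun v hv => ?_)
  · filter_upwards [self_mem_nhdsWithin, mem_nhdsWithin_of_mem_nhds (Iio_mem_nhds hlam₀₁)]
      with lam hlam hlam₁
    refine ae_of_all _ fun v hv => ?_
    rw [uIoc_of_le (by norm_num)] at hv
    refine abs_dispersionIntegrand_le hlam.1 hv.1.le hδ (min_le_min le_rfl ?_)
    nlinarith [hlam₁.out]
  · rw [uIoc_of_le (by norm_num)] at hv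
    refine ContinuousAt.continuousWithinAt (ContinuousAt.div (by fun_prop)
      (by unfold dispersionDenom; fun_prop) ?_)
    exact (dispersionDenom_pos hη hlam₀ hlam₀Λ hv.1.le).ne'

theorem integral_div_affine {A c lam s t : ℝ} (hlam : lam ≠ 0)
    (hpos : ∀ v ∈ uIcc s t, 0 < A + lam * (v - c)) :
    ∫ v in s..t, (v - c) / (A + lam * (v - c)) =
      (t - s) / lam -
        A / lam ^ 2 * (Real.log (A + lam * (t - c)) - Real.log (A + lam * (s - c))) := by
  have hderiv : ∀ v ∈ uIcc s t,
      HasDerivAt (fun v => (v - c) / lam - A / lam ^ 2 * Real.log (A + lam * (v - c)))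
        ((v - c) / (A + lam * (v - c))) v := by
    intro v hv
    have hD := (hpos v hv).ne'
    have hlin : HasDerivAt (fun v => A + lam * (v - c)) lam v := by
      simpa using (((hasDerivAt_id v).sub_const c).const_mul lam).const_add A
    have hquot : HasDerivAt (fun v => (v - c) / lam) (1 / lam) v := by
      simpa using ((hasDerivAt_id v).sub_const c).div_const lam
    refine (hquot.sub ((hlin.log hD).const_mul (A / lam ^ 2))).congr_deriv ?_
    field_simp
    ring
  rw [integral_eq_sub_of_hasDerivAt hderiv]
  · ring
  · exact ContinuousOn.intervalIntegrable
      (ContinuousOn.div (by fun_prop) (by fun_prop) fun v hv => (hpos v hv).ne')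

theorem dispersion_le_dispersionLeft_add (hη : -1 < η) (hc : -1 < c) (hc1 : c ≤ 1)
    (hlam0 : 0 ≤ lam) (hlam : lam * (1 + c) < 1 - η) :
    dispersion η c lam ≤ dispersionLeft η c lam + (1 - c) ^ 2 / (1 + η) := by
  have hint := intervalIntegrable_dispersionIntegrand hη hlam0 hlam
  have hcI : c ∈ uIcc (-1 : ℝ) 1 := by rw [uIcc_of_le (by norm_num)]; exact ⟨hc.le, hc1⟩
  have hintRight := hint.mono_set (uIcc_subset_uIcc hcI right_mem_uIcc)
  rw [dispersion, ← integral_add_adjacent_intervals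
    (hint.mono_set (uIcc_subset_uIcc left_mem_uIcc hcI)) hintRight]
  have hleft : EqOn (dispersionIntegrand η c lam) (fun v => (v - c) / (1 - η + lam * (v - c)))
      (uIcc (-1) c) := by
    intro v hv
    rw [uIcc_of_le hc.le] at hv
    rcases hv.2.eq_or_lt with rfl | hvc
    · simp [dispersionIntegrand]
    · rw [dispersionIntegrand, dispersionDenom, Real.sign_of_neg (sub_neg.2 hvc)]
      ring_nf
  have hright : ∫ v in c..1, dispersionIntegrand η c lam v ≤ (1 - c) ^ 2 / (1 + η) := by
    calc ∫ v in c..1, dispersionIntegrand η c lam v ≤ ∫ _ in c..1, (1 - c) / (1 + η) := by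
          refine integral_mono_on hc1 hintRight intervalIntegrable_const fun v hv => ?_
          rcases hv.1.eq_or_lt with rfl | hvc
          · simp only [dispersionIntegrand, sub_self, zero_div]
            exact div_nonneg (by linarith) (by linarith)
          · rw [dispersionIntegrand, dispersionDenom, Real.sign_of_pos (sub_pos.2 hvc)]
            exact div_le_div₀ (by linarith) (by linarith [hv.2]) (by linarith)
              (by nlinarith [mul_nonneg hlam0 (sub_pos.2 hvc).le])
      _ = (1 - c) ^ 2 / (1 + η) := by rw [intervalIntegral.integral_const, smul_eq_mul]; ring
  rw [integral_congr hleft]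
  exact add_le_add_right hright _

end Dispersion

theorem tendsto_log_sub_mul_nhdsLT {A q : ℝ} (hq : 0 < q) :
    Tendsto (fun lam => Real.log (A - lam * q)) (𝓝[<] (A / q)) atBot := by
  refine Real.tendsto_log_nhdsGT_zero.comp (tendsto_nhdsWithin_iff.2 ⟨?_, ?_⟩)
  · have hcont : Continuous fun lam => A - lam * q := by fun_prop
    simpa [div_mul_cancel₀ A hq.ne'] using
      hcont.continuousWithinAt.tendsto (x := A / q) (s := Iio (A / q))
  · filter_upwards [self_mem_nhdsWithin] with lam hlam
    rw [mem_Iio, lt_div_iff₀ hq] at hlam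
    exact sub_pos.2 hlam

theorem tendsto_dispersionLeft_atBot {η c : ℝ} (hη : η < 1) (hc : -1 < c) :
    Tendsto (dispersionLeft η c) (𝓝[<] ((1 - η) / (1 + c))) atBot := by
  have hq : 0 < 1 + c := by linarith
  set Λ := (1 - η) / (1 + c)
  have hΛ : 0 < Λ := div_pos (by linarith) hq
  have hclosed : (fun lam => (1 + c) / lam - (1 - η) / lam ^ 2 * Real.log (1 - η)
        + (1 - η) / lam ^ 2 * Real.log (1 - η - lam * (1 + c))) =ᶠ[𝓝[<] Λ]
      dispersionLeft η c := by
    filter_upwards [Ioo_mem_nhdsLT hΛ] with lam ⟨hlam0, hlamΛ⟩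
    rw [lt_div_iff₀ hq] at hlamΛ
    rw [dispersionLeft, integral_div_affine hlam0.ne' fun v hv => ?_]
    · rw [sub_self, mul_zero, add_zero,
        show 1 - η + lam * (-1 - c) = 1 - η - lam * (1 + c) by ring]
      ring
    · rw [uIcc_of_le hc.le] at hv
      nlinarith [hv.1]
  refine Tendsto.congr' hclosed
    (Tendsto.add_atBot (C := (1 + c) / Λ - (1 - η) / Λ ^ 2 * Real.log (1 - η)) ?_ ?_)
  · exact ContinuousAt.tendsto (by fun_prop (disch := positivity)) |>.mono_left nhdsWithin_le_nhds
  · refine Tendsto.pos_mul_atBot (C := (1 - η) / Λ ^ 2) (by positivity) ?_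
      (tendsto_log_sub_mul_nhdsLT hq)
    exact ContinuousAt.tendsto (by fun_prop (disch := positivity)) |>.mono_left nhdsWithin_le_nhds

theorem tendsto_dispersion_atBot {η c : ℝ} (hη : η ∈ Ioo (-1) 1) (hc : c ∈ Ioo (-1) 1) :
    Tendsto (dispersion η c) (𝓝[<] ((1 - η) / (1 + c))) atBot := by
  have hΛ : 0 < (1 - η) / (1 + c) := div_pos (by linarith [hη.2]) (by linarith [hc.1])
  refine tendsto_atBot_mono' _ ?_ (tendsto_atBot_add_const_right _ ((1 - c) ^ 2 / (1 + η))
    (tendsto_dispersionLeft_atBot hη.2 hc.1))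
  filter_upwards [Ioo_mem_nhdsLT hΛ] with lam ⟨hlam0, hlamΛ⟩
  rw [lt_div_iff₀ (by linarith [hc.1])] at hlamΛ
  exact dispersion_le_dispersionLeft_add hη.1 hc.1 hc.2.le hlam0.le hlamΛ

theorem exists_isLeast_zero_of_continuousOn_Ico {f : ℝ → ℝ} {a b : ℝ} (hab : a < b)
    (hf : ContinuousOn f (Ico a b)) (ha : 0 < f a) (hb : Tendsto f (𝓝[<] b) atBot) :
    ∃ x, IsLeast {y ∈ Ioo a b | f y = 0} x := by
  obtain ⟨t, hft, hat, htb⟩ :=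
    ((hb.eventually (eventually_lt_atBot 0)).and (Ioo_mem_nhdsLT hab)).exists
  have hft' : ContinuousOn f (Icc a t) := hf.mono (Icc_subset_Ico_right htb)
  have hZ : IsCompact (Icc a t ∩ f ⁻¹' {0}) := isCompact_Icc.of_isClosed_subset
    (hft'.preimage_isClosed_of_isClosed isClosed_Icc isClosed_singleton) inter_subset_left
  obtain ⟨z, hz, hz0⟩ := intermediate_value_Icc' hat.le hft' ⟨hft.le, ha.le⟩
  obtain ⟨x, ⟨hxI, hx0⟩, hxmin⟩ := hZ.exists_isLeast ⟨z, hz, hz0⟩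
  have hxa : a < x := hxI.1.lt_of_ne fun hax => ha.ne' (hax ▸ hx0)
  refine ⟨x, ⟨⟨hxa, hxI.2.trans_lt htb⟩, hx0⟩, fun y ⟨hy, hy0⟩ => ?_⟩
  rcases le_or_gt y t with hyt | hty
  · exact hxmin ⟨⟨hy.1.le, hyt⟩, hy0⟩
  · exact hxI.2.trans hty.le

/-- Existence of the growth exponent `λ₋` at the back of the wave: if
`∫_{-1}^1 (v-c)/(1 + η sgn(v-c)) dv > 0` (i.e. `c < c^*`), then the function
`h(λ) = ∫_{-1}^1 (v-c)/(1 + η sgn(v-c) + λ(v-c)) dv`, whose denominator stays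
positive for `λ ∈ [0, (1-η)/(1+c))`, satisfies `h(0) > 0`, tends to `-∞` as
`λ → ((1-η)/(1+c))⁻`, and admits a smallest zero `λ₋ ∈ (0, (1-η)/(1+c))`. -/
theorem growth_exponent_exists_at_back
    (η c : ℝ) (hη : η ∈ Set.Ioo (-1 : ℝ) 1) (hc : c ∈ Set.Ioo (-1 : ℝ) 1)
    (hflux : 0 < ∫ v in (-1 : ℝ)..1, (v - c) / (1 + η * Real.sign (v - c)))
    (h : ℝ → ℝ)
    (hh : ∀ lam, h lam =
      ∫ v in (-1 : ℝ)..1,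
        (v - c) / (1 + η * Real.sign (v - c) + lam * (v - c))) :
    (∀ lam ∈ Set.Ico (0 : ℝ) ((1 - η) / (1 + c)),
      ∀ v ∈ Set.Ioo (-1 : ℝ) 1, v ≠ c →
        0 < 1 + η * Real.sign (v - c) + lam * (v - c)) ∧
    0 < h 0 ∧
    Tendsto h (nhdsWithin ((1 - η) / (1 + c)) (Set.Iio ((1 - η) / (1 + c))))
      atBot ∧
    ∃ lamm ∈ Set.Ioo (0 : ℝ) ((1 - η) / (1 + c)), h lamm = 0 ∧
      ∀ μ ∈ Set.Ioo (0 : ℝ) ((1 - η) / (1 + c)), h μ = 0 → lamm ≤ μ := by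
  obtain rfl : h = dispersion η c := funext hh
  have hq : 0 < 1 + c := by linarith [hc.1]
  have h0 : 0 < dispersion η c 0 := by
    simpa [dispersion, dispersionIntegrand, dispersionDenom] using hflux
  have htend := tendsto_dispersion_atBot hη hc
  refine ⟨fun lam hlam v hv _ =>
    dispersionDenom_pos hη.1 hlam.1 ((lt_div_iff₀ hq).1 hlam.2) hv.1.le, h0, htend, ?_⟩
  obtain ⟨x, ⟨hx, hx0⟩, hxmin⟩ := exists_isLeast_zero_of_continuousOn_Ico
    (div_pos (by linarith [hη.2]) hq) (continuousOn_dispersion hη.1 hc.1) h0 htend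
  exact ⟨x, hx, hx0, fun μ hμ hμ0 => hxmin ⟨hμ, hμ0⟩⟩
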